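/- On C^3 with basis e_1, e_2, e_3 and a fixed λ ∈ C, the product defined by e_1*e_1 = -e_1 + (λ² - λ)e_3, e_1*e_3 = (λ-1)e_3, e_2*e_1 = -e_2, e_3*e_1 = -e_3, and all other basis products zero, is left-symmetric, and its commutator Lie algebra satisfies [e_1,e_2] = e_2, [e_1,e_3] = λ e_3, [e_2,e_3] = 0. -/
import Mathlib


/-- The standard basis vector of `ℂ³`. -/
noncomputable def e3 (i : Fin 3) : Fin 3 → ℂ := Pi.single i 1

lemma e3_decomp (x : Fin 3 → ℂ) : x = x 0 • e3 0 + x 1 • e3 1 + x 2 • e3 2 := by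
  funext i
  fin_cases i <;> simp [e3, Pi.single_apply]

/-- For λ ∈ ℂ, the product on `ℂ³` with `e₁*e₁ = -e₁ + (λ² - λ)e₃`,
`e₁*e₃ = (λ-1)e₃`, `e₂*e₁ = -e₂`, `e₃*e₁ = -e₃` (other basis products zero) is
left-symmetric, with commutator brackets `[e₁,e₂] = e₂`, `[e₁,e₃] = λe₃`, `[e₂,e₃] = 0`. -/
theorem r3_lambda_lsa (lam : ℂ)
    (mul : (Fin 3 → ℂ) →ₗ[ℂ] (Fin 3 → ℂ) →ₗ[ℂ] (Fin 3 → ℂ))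
    (h11 : mul (e3 0) (e3 0) = -e3 0 + (lam ^ 2 - lam) • e3 2)
    (h12 : mul (e3 0) (e3 1) = 0)
    (h13 : mul (e3 0) (e3 2) = (lam - 1) • e3 2)
    (h21 : mul (e3 1) (e3 0) = -e3 1)
    (h22 : mul (e3 1) (e3 1) = 0)
    (h23 : mul (e3 1) (e3 2) = 0)
    (h31 : mul (e3 2) (e3 0) = -e3 2)
    (h32 : mul (e3 2) (e3 1) = 0)
    (h33 : mul (e3 2) (e3 2) = 0) :
    (∀ x y z : Fin 3 → ℂ,
      mul (mul x y) z - mul x (mul y z) = mul (mul y x) z - mul y (mul x z)) ∧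
    mul (e3 0) (e3 1) - mul (e3 1) (e3 0) = e3 1 ∧
    mul (e3 0) (e3 2) - mul (e3 2) (e3 0) = lam • e3 2 ∧
    mul (e3 1) (e3 2) - mul (e3 2) (e3 1) = 0 := by
  refine ⟨?_, ?_, ?_, ?_⟩
  · intro x y z
    rw [e3_decomp x, e3_decomp y, e3_decomp z]
    simp only [map_add, map_smul, LinearMap.add_apply, LinearMap.smul_apply,
      h11, h12, h13, h21, h22, h23, h31, h32, h33, smul_zero, smul_add, smul_neg,
      add_zero, zero_add, map_neg, LinearMap.neg_apply, map_zero, LinearMap.zero_apply,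
      smul_smul]
    module
  · rw [h12, h21]; module
  · rw [h13, h31]; module
  · rw [h23, h32]; simp
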